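/- arXiv:2309.10558 — 4 statements merged into one kernel-verified Lean document; each statement's English description precedes it below -/
import Mathlib

section
/- Let P be an edge-ordered path with at least two edges. If P is a monotone path or a flipped path, then ex_<(n, P) = Θ(n): there exist constants c, C > 0 such that c·n ≤ ex_<(n, P) ≤ C·n for all sufficiently large n. -/
set_option maxHeartbeats 1000000

/-- An edge-ordered graph: a finite simple graph together with an injective
real labeling of its edges (inducing a linear order on the edge set). -/
structure EOGraph (V : Type) [Fintype V] where
  graph : SimpleGraph V
  label : Sym2 V → ℝ
  inj : ∀ e ∈ graph.edgeSet, ∀ f ∈ graph.edgeSet, label e = label f → e = f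

/-- `G` contains `H`: an injective, adjacency-preserving, edge-order-respecting map. -/
def EOContains {V W : Type} [Fintype V] [Fintype W] (G : EOGraph V) (H : EOGraph W) : Prop :=
  ∃ f : W → V, Function.Injective f ∧
    (∀ a b, H.graph.Adj a b → G.graph.Adj (f a) (f b)) ∧
    ∀ e ∈ H.graph.edgeSet, ∀ e' ∈ H.graph.edgeSet,
      H.label e < H.label e' → G.label (Sym2.map f e) < G.label (Sym2.map f e')

/-- The Turán number `ex_<(n, H)`: the maximum number of edges of an
edge-ordered graph on `n` vertices avoiding `H`. -/
noncomputable def exLT {W : Type} [Fintype W] (n : ℕ) (H : EOGraph W) : ℕ :=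
  sSup {m | ∃ G : EOGraph (Fin n), ¬ EOContains G H ∧ G.graph.edgeSet.ncard = m}

/-- The reverse of an edge-ordered graph: same graph, reversed edge order. -/
def EOGraph.reverse {V : Type} [Fintype V] (G : EOGraph V) : EOGraph V where
  graph := G.graph
  label := fun e => - G.label e
  inj := fun e he f hf h => G.inj e he f hf (neg_inj.mp h)

/-- Two edges (as elements of `Sym2 V`) are adjacent if they share a vertex. -/
def EdgesAdjacent {V : Type} (e f : Sym2 V) : Prop := ∃ v, v ∈ e ∧ v ∈ f

/-- `e` and `f` are consecutive edges of `G`: `e < f` with no edge strictly in between. -/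
def Consecutive {V : Type} [Fintype V] (G : EOGraph V) (e f : Sym2 V) : Prop :=
  e ∈ G.graph.edgeSet ∧ f ∈ G.graph.edgeSet ∧ G.label e < G.label f ∧
    ¬ ∃ g ∈ G.graph.edgeSet, G.label e < G.label g ∧ G.label g < G.label f

/-- A semi-caterpillar: the underlying graph is a tree with at least one edge, and any
pair of consecutive edges is adjacent or directly connected by an edge larger than both. -/
def IsSemiCaterpillar {V : Type} [Fintype V] (G : EOGraph V) : Prop :=
  G.graph.IsTree ∧ G.graph.edgeSet.Nonempty ∧
  ∀ e f, Consecutive G e f →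
    EdgesAdjacent e f ∨
    ∃ u v, s(u, v) ∈ G.graph.edgeSet ∧ u ∈ e ∧ v ∈ f ∧
      G.label e < G.label s(u, v) ∧ G.label f < G.label s(u, v)

/-- The order chromatic number of `G` is at most `k`: there is a simple graph `H` with
chromatic number at most `k` all of whose edge-orderings contain `G`. -/
def OrderChromAtMost {V : Type} [Fintype V] (G : EOGraph V) (k : ℕ) : Prop :=
  ∃ (m : ℕ) (H : SimpleGraph (Fin m)), H.chromaticNumber ≤ (k : ℕ∞) ∧
    ∀ K : EOGraph (Fin m), K.graph = H → EOContains K G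

/-- The order chromatic number of `G` equals 2. -/
def HasOrderChrom2 {V : Type} [Fintype V] (G : EOGraph V) : Prop :=
  OrderChromAtMost G 2 ∧ ¬ OrderChromAtMost G 1

/-- A vertex is close if the edges incident to it form an interval in the edge order. -/
def CloseVertex {V : Type} [Fintype V] (G : EOGraph V) (v : V) : Prop :=
  ∀ e ∈ G.graph.edgeSet, ∀ f ∈ G.graph.edgeSet, ∀ g ∈ G.graph.edgeSet,
    v ∈ e → v ∈ g → G.label e ≤ G.label f → G.label f ≤ G.label g → v ∈ f

/-- An edge-ordered bigraph: an edge-ordered graph with a proper 2-coloring of the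
vertices into left (`false`) and right (`true`) vertices. -/
structure EOBigraph (V : Type) [Fintype V] where
  toEOGraph : EOGraph V
  side : V → Bool
  proper : ∀ u v, toEOGraph.graph.Adj u v → side u ≠ side v

/-- A right caterpillar: an edge-ordered bigraph whose underlying edge-ordered graph is a
semi-caterpillar and all of whose right vertices are close. -/
def IsRightCaterpillar {V : Type} [Fintype V] (B : EOBigraph V) : Prop :=
  IsSemiCaterpillar B.toEOGraph ∧ ∀ v, B.side v = true → CloseVertex B.toEOGraph v

/-- Containment of edge-ordered bigraphs: additionally sides must be preserved. -/
def BContains {V W : Type} [Fintype V] [Fintype W] (G : EOBigraph V) (H : EOBigraph W) : Prop :=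
  ∃ f : W → V, Function.Injective f ∧
    (∀ a b, H.toEOGraph.graph.Adj a b → G.toEOGraph.graph.Adj (f a) (f b)) ∧
    (∀ e ∈ H.toEOGraph.graph.edgeSet, ∀ e' ∈ H.toEOGraph.graph.edgeSet,
      H.toEOGraph.label e < H.toEOGraph.label e' →
        G.toEOGraph.label (Sym2.map f e) < G.toEOGraph.label (Sym2.map f e')) ∧
    ∀ a, G.side (f a) = H.side a

/-- Isomorphism of edge-ordered bigraphs. -/
def BIsoTo {V W : Type} [Fintype W] [Fintype V] (H : EOBigraph W) (G : EOBigraph V) : Prop :=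
  ∃ f : W ≃ V, (∀ a b, H.toEOGraph.graph.Adj a b ↔ G.toEOGraph.graph.Adj (f a) (f b)) ∧
    (∀ e ∈ H.toEOGraph.graph.edgeSet, ∀ e' ∈ H.toEOGraph.graph.edgeSet,
      (H.toEOGraph.label e < H.toEOGraph.label e' ↔
        G.toEOGraph.label (Sym2.map f e) < G.toEOGraph.label (Sym2.map f e'))) ∧
    ∀ a, G.side (f a) = H.side a

/-- Isomorphism of edge-ordered graphs. -/
def EOIsoTo {V W : Type} [Fintype W] [Fintype V] (H : EOGraph W) (G : EOGraph V) : Prop :=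
  ∃ f : W ≃ V, (∀ a b, H.graph.Adj a b ↔ G.graph.Adj (f a) (f b)) ∧
    ∀ e ∈ H.graph.edgeSet, ∀ e' ∈ H.graph.edgeSet,
      (H.label e < H.label e' ↔ G.label (Sym2.map f e) < G.label (Sym2.map f e'))

/-- The labeling of the path graph on `Fin k` in which the edge `{i, i+1}` gets label `w i`. -/
def pathLabel {k : ℕ} (w : Fin k → ℝ) : Sym2 (Fin k) → ℝ :=
  Sym2.lift ⟨fun i j => w (min i j), fun i j => by simp [min_comm]⟩

lemma pathGraph_edge_form {k : ℕ} {e : Sym2 (Fin k)}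
    (he : e ∈ (SimpleGraph.pathGraph k).edgeSet) :
    ∃ i j : Fin k, e = s(i, j) ∧ (i : ℕ) + 1 = (j : ℕ) := by
  induction e using Sym2.inductionOn with
  | hf a b =>
    rw [SimpleGraph.mem_edgeSet, SimpleGraph.pathGraph_adj] at he
    rcases he with h | h
    · exact ⟨a, b, rfl, h⟩
    · exact ⟨b, a, Sym2.eq_swap, h⟩

/-- The edge-ordered path on `k` vertices whose edge labels, listed along the path,
are `w 0, w 1, …, w (k-2)`. -/
def pathEO (k : ℕ) (w : Fin k → ℝ) (hw : Function.Injective w) : EOGraph (Fin k) where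
  graph := SimpleGraph.pathGraph k
  label := pathLabel w
  inj := by
    intro e he f hf hef
    obtain ⟨i, j, rfl, hij⟩ := pathGraph_edge_form he
    obtain ⟨i', j', rfl, hij'⟩ := pathGraph_edge_form hf
    have h1 : min i j = i := min_eq_left (Fin.le_def.mpr (by omega))
    have h2 : min i' j' = i' := min_eq_left (Fin.le_def.mpr (by omega))
    simp only [pathLabel, Sym2.lift_mk] at hef
    rw [h1, h2] at hef
    have hii : i = i' := hw hef
    have hjj : j = j' := Fin.ext (by omega)
    rw [hii, hjj]

/-- The edge-ordered path with natural-number labels. -/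
def pathEON (k : ℕ) (v : Fin k → ℕ) (hv : Function.Injective v) : EOGraph (Fin k) :=
  pathEO k (fun i => (v i : ℝ)) (fun a b h => hv (Nat.cast_injective h))

/-- The bipartition of the edge-ordered path `pathEON k v hv`; the starting vertex is a
right vertex iff `startRight` holds (right = `true`, left = `false`). -/
def pathEOBig (k : ℕ) (v : Fin k → ℕ) (hv : Function.Injective v) (startRight : Bool) :
    EOBigraph (Fin k) where
  toEOGraph := pathEON k v hv
  side := fun i => if i.val % 2 = 0 then startRight else !startRight
  proper := by
    intro a b hab
    have h : (SimpleGraph.pathGraph k).Adj a b := hab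
    rw [SimpleGraph.pathGraph_adj] at h
    have hpar : (a.val % 2 = 0) ↔ ¬ (b.val % 2 = 0) := by omega
    by_cases ha : a.val % 2 = 0 <;> by_cases hb : b.val % 2 = 0 <;>
      simp_all

def P4_213 : EOGraph (Fin 4) := pathEON 4 ![2,1,3,0] (by decide)
def P5_1342 : EOGraph (Fin 5) := pathEON 5 ![1,3,4,2,0] (by decide)
def P5_1432 : EOGraph (Fin 5) := pathEON 5 ![1,4,3,2,0] (by decide)
def P6_13254 : EOGraph (Fin 6) := pathEON 6 ![1,3,2,5,4,0] (by decide)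
def P6_21354 : EOGraph (Fin 6) := pathEON 6 ![2,1,3,5,4,0] (by decide)
def P6plus_13254 : EOBigraph (Fin 6) := pathEOBig 6 ![1,3,2,5,4,0] (by decide) true
def P6minus_13254 : EOBigraph (Fin 6) := pathEOBig 6 ![1,3,2,5,4,0] (by decide) false
def P5plus_2143 : EOBigraph (Fin 5) := pathEOBig 5 ![2,1,4,3,0] (by decide) true
def P5minus_2143 : EOBigraph (Fin 5) := pathEOBig 5 ![2,1,4,3,0] (by decide) false

/-- `B'` is an extension of `B`: it is obtained by adding new edges, each connecting an end
of the smallest edge `s(x,y)` of `B` to a new degree-1 vertex, all new edges being smaller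
than `s(x,y)`, and all new edges at the left end being smaller than those at the right end. -/
def IsExtensionOf {V' V : Type} [Fintype V'] [Fintype V]
    (B' : EOBigraph V') (B : EOBigraph V) : Prop :=
  ∃ (ι : V → V') (x y : V),
    Function.Injective ι ∧
    B.toEOGraph.graph.Adj x y ∧ B.side x = false ∧ B.side y = true ∧
    (∀ e ∈ B.toEOGraph.graph.edgeSet, B.toEOGraph.label s(x, y) ≤ B.toEOGraph.label e) ∧
    (∀ a b, B.toEOGraph.graph.Adj a b ↔ B'.toEOGraph.graph.Adj (ι a) (ι b)) ∧
    (∀ a, B'.side (ι a) = B.side a) ∧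
    (∀ e ∈ B.toEOGraph.graph.edgeSet, ∀ f ∈ B.toEOGraph.graph.edgeSet,
      (B.toEOGraph.label e < B.toEOGraph.label f ↔
        B'.toEOGraph.label (Sym2.map ι e) < B'.toEOGraph.label (Sym2.map ι f))) ∧
    (∀ w : V', w ∉ Set.range ι →
      (∃! u, B'.toEOGraph.graph.Adj w u) ∧
      (∀ u, B'.toEOGraph.graph.Adj w u → (u = ι x ∨ u = ι y) ∧
        B'.toEOGraph.label s(w, u) < B'.toEOGraph.label s(ι x, ι y))) ∧
    (∀ w w' : V', w ∉ Set.range ι → w' ∉ Set.range ι →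
      B'.toEOGraph.graph.Adj w (ι x) → B'.toEOGraph.graph.Adj w' (ι y) →
      B'.toEOGraph.label s(w, ι x) < B'.toEOGraph.label s(w', ι y))

/-- A bundled edge-ordered bigraph (on some `Fin n`). -/
structure BundledBigraph where
  n : ℕ
  big : EOBigraph (Fin n)

/-- `B` is (isomorphic to) `T₀`, the edge-ordered bigraph with one edge and two vertices. -/
def IsT0 {V : Type} [Fintype V] (B : EOBigraph V) : Prop :=
  Fintype.card V = 2 ∧ ∀ u v : V, u ≠ v → B.toEOGraph.graph.Adj u v

/-- `B` can be obtained (up to isomorphism) from `T₀` by a sequence of `i` extensions. -/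
def ReachedInSteps {V : Type} [Fintype V] (i : ℕ) (B : EOBigraph V) : Prop :=
  ∃ f : ℕ → BundledBigraph, IsT0 (f 0).big ∧ BIsoTo (f i).big B ∧
    ∀ j < i, IsExtensionOf (f (j+1)).big (f j).big

/-- The recursive depth of a right caterpillar: the minimum number of extension steps
needed to obtain it from `T₀`. -/
def HasRecursiveDepth {V : Type} [Fintype V] (B : EOBigraph V) (i : ℕ) : Prop :=
  ReachedInSteps i B ∧ ∀ j < i, ¬ ReachedInSteps j B

/-- An edge `e` (with left end `x` and right end `y`) is `c`-left-leaning: there are `c` edges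
at `x` and `c` edges at `y` with every edge of the latter set larger than every edge of the
former, but smaller than `e`. -/
def LeftLeaning {V : Type} [Fintype V] (c : ℕ) (G : EOBigraph V) (e : Sym2 V) : Prop :=
  ∃ x y : V, e = s(x, y) ∧ e ∈ G.toEOGraph.graph.edgeSet ∧
    G.side x = false ∧ G.side y = true ∧
    ∃ S S' : Finset (Sym2 V), S.card = c ∧ S'.card = c ∧
      (∀ f ∈ S, f ∈ G.toEOGraph.graph.edgeSet ∧ x ∈ f) ∧
      (∀ f ∈ S', f ∈ G.toEOGraph.graph.edgeSet ∧ y ∈ f) ∧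
      (∀ f ∈ S, ∀ f' ∈ S', G.toEOGraph.label f < G.toEOGraph.label f') ∧
      (∀ f' ∈ S', G.toEOGraph.label f' < G.toEOGraph.label e)

/-- An edge `e` (with left end `x` and right end `y`) is `c`-right-leaning. -/
def RightLeaning {V : Type} [Fintype V] (c : ℕ) (G : EOBigraph V) (e : Sym2 V) : Prop :=
  ∃ x y : V, e = s(x, y) ∧ e ∈ G.toEOGraph.graph.edgeSet ∧
    G.side x = false ∧ G.side y = true ∧
    ∃ S S' : Finset (Sym2 V), S.card = c ∧ S'.card = c ∧
      (∀ f ∈ S, f ∈ G.toEOGraph.graph.edgeSet ∧ x ∈ f) ∧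
      (∀ f ∈ S', f ∈ G.toEOGraph.graph.edgeSet ∧ y ∈ f) ∧
      (∀ f' ∈ S', ∀ f ∈ S, G.toEOGraph.label f' < G.toEOGraph.label f) ∧
      (∀ f ∈ S, G.toEOGraph.label f < G.toEOGraph.label e)

/-- The spanning sub-bigraph of `G` consisting of the edges satisfying `P`. -/
def bigraphRestrict {V : Type} [Fintype V] (G : EOBigraph V) (P : Sym2 V → Prop) :
    EOBigraph V where
  toEOGraph :=
    { graph := SimpleGraph.fromEdgeSet {e | e ∈ G.toEOGraph.graph.edgeSet ∧ P e}
      label := G.toEOGraph.label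
      inj := by
        intro e he f hf h
        rw [SimpleGraph.edgeSet_fromEdgeSet] at he hf
        exact G.toEOGraph.inj e he.1.1 f hf.1.1 h }
  side := G.side
  proper := by
    intro u v huv
    rw [SimpleGraph.fromEdgeSet_adj] at huv
    have h1 : s(u, v) ∈ G.toEOGraph.graph.edgeSet := huv.1.1
    exact G.proper u v ((SimpleGraph.mem_edgeSet _).mp h1)

/-- The spanning subgraph of the `c`-left-leaning edges. -/
def leftSub {V : Type} [Fintype V] (c : ℕ) (G : EOBigraph V) : EOBigraph V :=
  bigraphRestrict G (LeftLeaning c G)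

/-- The spanning subgraph of the `c`-right-leaning edges. -/
def rightSub {V : Type} [Fintype V] (c : ℕ) (G : EOBigraph V) : EOBigraph V :=
  bigraphRestrict G (RightLeaning c G)

/-- `G^{c-left}_i`: iteratively keep only `c`-left-leaning edges, `i` times. -/
def leftIter {V : Type} [Fintype V] (c i : ℕ) (G : EOBigraph V) : EOBigraph V :=
  (leftSub c)^[i] G

/-- `G^{c-right}_i`: iteratively keep only `c`-right-leaning edges, `i` times. -/
def rightIter {V : Type} [Fintype V] (c i : ℕ) (G : EOBigraph V) : EOBigraph V :=
  (rightSub c)^[i] G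

/-- The set of labels of edges incident to `v`. -/
def incidentLabels {V : Type} [Fintype V] (G : EOGraph V) (v : V) : Set ℝ :=
  G.label '' {e | e ∈ G.graph.edgeSet ∧ v ∈ e}

/-- The vertex label `l(v)`: the second smallest label among the edges incident to `v`
(meaningful when `v` has degree at least 2). -/
noncomputable def secondLabel {V : Type} [Fintype V] (G : EOGraph V) (v : V) : ℝ :=
  sInf (incidentLabels G v \ {sInf (incidentLabels G v)})

/-- `v` has degree at least 2. -/
def DegTwo {V : Type} [Fintype V] (G : EOGraph V) (v : V) : Prop :=
  2 ≤ {e | e ∈ G.graph.edgeSet ∧ v ∈ e}.ncard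

/-- An edge `xy` (left end `x`, right end `y`) is left inclined if `l(x) < l(y) ≤ L(xy)`. -/
def LeftInclined {V : Type} [Fintype V] (G : EOBigraph V) (e : Sym2 V) : Prop :=
  ∃ x y : V, e = s(x, y) ∧ e ∈ G.toEOGraph.graph.edgeSet ∧
    G.side x = false ∧ G.side y = true ∧
    DegTwo G.toEOGraph x ∧ DegTwo G.toEOGraph y ∧
    secondLabel G.toEOGraph x < secondLabel G.toEOGraph y ∧
    secondLabel G.toEOGraph y ≤ G.toEOGraph.label e

/-- An edge `xy` (left end `x`, right end `y`) is right inclined if `l(y) < l(x) ≤ L(xy)`. -/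
def RightInclined {V : Type} [Fintype V] (G : EOBigraph V) (e : Sym2 V) : Prop :=
  ∃ x y : V, e = s(x, y) ∧ e ∈ G.toEOGraph.graph.edgeSet ∧
    G.side x = false ∧ G.side y = true ∧
    DegTwo G.toEOGraph x ∧ DegTwo G.toEOGraph y ∧
    secondLabel G.toEOGraph y < secondLabel G.toEOGraph x ∧
    secondLabel G.toEOGraph x ≤ G.toEOGraph.label e

/-- `G_l`: the spanning sub-bigraph of the left inclined edges of `G`. -/
def inclinedLeftSub {V : Type} [Fintype V] (G : EOBigraph V) : EOBigraph V :=
  bigraphRestrict G (LeftInclined G)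

/-- `G_r`: the spanning sub-bigraph of the right inclined edges of `G`. -/
def inclinedRightSub {V : Type} [Fintype V] (G : EOBigraph V) : EOBigraph V :=
  bigraphRestrict G (RightInclined G)

/-- The underlying simple graph of `P` is a path. -/
def IsPathEO {V : Type} [Fintype V] (P : EOGraph V) : Prop :=
  ∃ (k : ℕ) (f : V ≃ Fin k), ∀ a b, P.graph.Adj a b ↔ (SimpleGraph.pathGraph k).Adj (f a) (f b)

/-- A monotone path: the labels increase (or decrease) monotonically along the path. -/
def IsMonotonePath {V : Type} [Fintype V] (P : EOGraph V) : Prop :=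
  ∃ (k : ℕ) (w : Fin k → ℝ) (hw : Function.Injective w),
    (StrictMono w ∨ StrictAnti w) ∧ EOIsoTo (pathEO k w hw) P

/-- A flipped path: obtained from a monotone path (with at least 3 edges) by swapping
either the two smallest or the two largest labels. -/
def IsFlippedPath {V : Type} [Fintype V] (P : EOGraph V) : Prop :=
  ∃ (k : ℕ) (hk : 4 ≤ k) (w : Fin k → ℝ) (hw : StrictMono w),
    EOIsoTo (pathEO k (w ∘ (Equiv.swap (⟨0, by omega⟩ : Fin k) ⟨1, by omega⟩))
      (hw.injective.comp (Equiv.injective _))) P ∨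
    EOIsoTo (pathEO k (w ∘ (Equiv.swap (⟨k-3, by omega⟩ : Fin k) ⟨k-2, by omega⟩))
      (hw.injective.comp (Equiv.injective _))) P

/-- 0-1 matrix containment: `A` contains `B` if `B` can be obtained from a submatrix of `A`
by possibly changing some 1 entries to 0. -/
def MContains {m n p q : ℕ} (A : Fin m → Fin n → Bool) (B : Fin p → Fin q → Bool) : Prop :=
  ∃ (r : Fin p → Fin m) (c : Fin q → Fin n), StrictMono r ∧ StrictMono c ∧
    ∀ i j, B i j = true → A (r i) (c j) = true

/-- The extremal function of a 0-1 matrix `B`: the maximum number of 1 entries in an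
`n × n` 0-1 matrix avoiding `B`. -/
noncomputable def mex {p q : ℕ} (n : ℕ) (B : Fin p → Fin q → Bool) : ℕ :=
  sSup {k | ∃ A : Fin n → Fin n → Bool, ¬ MContains A B ∧
    k = (Finset.univ.filter fun ij : Fin n × Fin n => A ij.1 ij.2 = true).card}

/-- The staircase with positions `p 0, …, p t` describes the matrix `A`. -/
def DescribedBy {nr nc : ℕ} (A : Fin nr → Fin nc → Bool) (t : ℕ)
    (p : Fin (t + 1) → Fin nr × Fin nc) : Prop :=
  (∀ k : Fin t,
      ((p k.succ).1.val = (p k.castSucc).1.val + 1 ∧ (p k.succ).2 = (p k.castSucc).2) ∨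
      ((p k.succ).1 = (p k.castSucc).1 ∧ (p k.succ).2.val = (p k.castSucc).2.val + 1)) ∧
  ∀ i j, A i j = true ↔
    ((∃ k, p k = (i, j)) ∨
     (i = (p 0).1 ∧ j < (p 0).2) ∨ (j = (p 0).2 ∧ i < (p 0).1) ∨
     (i = (p (Fin.last t)).1 ∧ (p (Fin.last t)).2 < j) ∨
     (j = (p (Fin.last t)).2 ∧ (p (Fin.last t)).1 < i))

/-- A staircase matrix: `A`, or `A` with the order of its columns reversed, is described
by a staircase. -/
def IsStaircaseMatrix {nr nc : ℕ} (A : Fin nr → Fin nc → Bool) : Prop :=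
  (∃ t p, DescribedBy A t p) ∨ (∃ t p, DescribedBy (fun i j => A i j.rev) t p)

/-- The bipartite graph whose bipartite adjacency matrix is `A`. -/
def MatrixGraph {nr nc : ℕ} (A : Fin nr → Fin nc → Bool) : SimpleGraph (Fin nr ⊕ Fin nc) :=
  SimpleGraph.fromRel fun u v =>
    match u, v with
    | .inl i, .inr j => A i j = true
    | _, _ => False

/-- A connected 0-1 matrix: the bipartite adjacency matrix of a connected graph. -/
def IsConnectedMatrix {nr nc : ℕ} (A : Fin nr → Fin nc → Bool) : Prop :=
  (MatrixGraph A).Connected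

/-!
A path with at least two edges has a vertex of degree two, so a perfect matching avoids it and
`ex_<(n, P) ≥ ⌊n / 2⌋`.

For the upper bound, prune the host graph in rounds: in each round every vertex discards its `s`
largest remaining edges. A round costs at most `s n` edges, so a graph with more than `K s n` edges
keeps an edge after `K` rounds. An edge surviving `j + 1` rounds has, at each endpoint, `s` larger
edges that survived `j` rounds, so walking greedily along ever larger surviving edges gives an
increasing path with `j + 1` edges on new vertices. For a flipped path, start from a surviving edge
`xy` and let `b` be the smallest larger surviving edge at `x` or `y`, say at `x`: then `b`, `xy` and
an increasing path from `y` above `b` form a path whose two smallest labels are swapped. Decreasing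
paths follow by reversing the edge order, and the other flip by reversing the path as well.
-/

open Finset

lemma EOContains.trans_eoIsoTo {U V W : Type} [Fintype U] [Fintype V] [Fintype W]
    {G : EOGraph U} {H : EOGraph W} {P : EOGraph V} (hGH : EOContains G H) (hHP : EOIsoTo H P) :
    EOContains G P := by
  obtain ⟨f, hf, hadj, hlabel⟩ := hGH
  obtain ⟨φ, hφadj, hφlabel⟩ := hHP
  have hadj' : ∀ a b, P.graph.Adj a b → H.graph.Adj (φ.symm a) (φ.symm b) := fun a b h =>
    (hφadj _ _).2 (by simpa using h)
  have hedge : ∀ e ∈ P.graph.edgeSet, Sym2.map φ.symm e ∈ H.graph.edgeSet := by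
    rintro ⟨a, b⟩ he
    exact hadj' a b he
  refine ⟨f ∘ φ.symm, hf.comp φ.symm.injective, fun a b h => hadj _ _ (hadj' a b h), ?_⟩
  intro e he e' he' hlt
  rw [← Sym2.map_map, ← Sym2.map_map]
  refine hlabel _ (hedge e he) _ (hedge e' he') ((hφlabel _ (hedge e he) _ (hedge e' he')).2 ?_)
  simpa [Sym2.map_map] using hlt

lemma pathEO_label_mk {k : ℕ} {w : Fin k → ℝ} (hw : Function.Injective w) {i j : Fin k}
    (h : (i : ℕ) + 1 = j) : (pathEO k w hw).label s(i, j) = w i := by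
  show w (min i j) = w i
  rw [min_eq_left (Fin.le_def.mpr (by omega))]

lemma lt_of_lt_comp_swap {k : ℕ} {w : Fin k → ℝ} (hw : StrictMono w) {a b : Fin k} {ℓ : ℕ → ℝ}
    (ha : (a : ℕ) < k - 1) (hb : (b : ℕ) < k - 1)
    (hℓ : StrictMonoOn (ℓ ∘ Equiv.swap (a : ℕ) b) (Set.Iio (k - 1))) {i j : Fin k}
    (hi : (i : ℕ) < k - 1) (hj : (j : ℕ) < k - 1)
    (h : (w ∘ Equiv.swap a b) i < (w ∘ Equiv.swap a b) j) : ℓ i < ℓ j := by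
  have hval : ∀ x : Fin k, ((Equiv.swap a b x : Fin k) : ℕ) = Equiv.swap (a : ℕ) b x :=
    fun x => (Fin.val_injective.swap_apply a b x).symm
  have hmem : ∀ x : Fin k, (x : ℕ) < k - 1 → Equiv.swap (a : ℕ) b x ∈ Set.Iio (k - 1) := by
    intro x hx
    simp only [Set.mem_Iio, Equiv.swap_apply_def]
    split_ifs <;> omega
  have hlt := Fin.lt_def.mp (hw.lt_iff_lt.mp h)
  rw [hval, hval] at hlt
  simpa using hℓ (hmem i hi) (hmem j hj) hlt

lemma sub_swap_eq_swap_sub {K i : ℕ} (hK : 2 ≤ K) (hi : i < K) :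
    K - 1 - Equiv.swap (K - 2) (K - 1) i = Equiv.swap 0 1 (K - 1 - i) := by
  simp only [Equiv.swap_apply_def]
  split_ifs <;> omega

lemma Finset.card_filter_card_filter_lt_lt_le {α β : Type*} [LinearOrder β] (S : Finset α)
    {L : α → β} (hL : Set.InjOn L S) (s : ℕ) :
    #{e ∈ S | #{f ∈ S | L e < L f} < s} ≤ s := by
  classical
  set T := {e ∈ S | #{f ∈ S | L e < L f} < s}
  by_contra! hT
  obtain ⟨e₀, he₀, hmin⟩ := T.exists_min_image L (card_pos.mp (by omega))
  have hsub : T.erase e₀ ⊆ {f ∈ S | L e₀ < L f} := by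
    intro f hf
    have hfS : f ∈ S := (mem_filter.mp (mem_of_mem_erase hf)).1
    refine mem_filter.mpr ⟨hfS, (hmin f (mem_of_mem_erase hf)).lt_of_ne fun h => ?_⟩
    exact ne_of_mem_erase hf (hL hfS (mem_filter.mp he₀).1 h.symm)
  have := card_le_card hsub
  have := (mem_filter.mp he₀).2
  rw [card_erase_of_mem he₀] at *
  omega

namespace EOGraph

variable {V : Type} [Fintype V] (G : EOGraph V)

lemma injOn_label : Set.InjOn G.label G.graph.edgeSet :=
  fun e he f hf h => G.inj e he f hf h

def walkLabel {u v : V} (q : G.graph.Walk u v) (i : ℕ) : ℝ :=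
  G.label s(q.getVert i, q.getVert (i + 1))

@[simp]
lemma walkLabel_cons_zero {u v w : V} (h : G.graph.Adj u v) (q : G.graph.Walk v w) :
    G.walkLabel (.cons h q) 0 = G.label s(u, v) := by
  simp [walkLabel]

@[simp]
lemma walkLabel_cons_succ {u v w : V} (h : G.graph.Adj u v) (q : G.graph.Walk v w) (i : ℕ) :
    G.walkLabel (.cons h q) (i + 1) = G.walkLabel q i := by
  simp [walkLabel, SimpleGraph.Walk.getVert_cons_succ]

lemma walkLabel_reverse {u v : V} (q : G.graph.Walk u v) {i : ℕ} (hi : i < q.length) :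
    G.walkLabel q.reverse i = G.walkLabel q (q.length - 1 - i) := by
  rw [walkLabel, walkLabel, q.getVert_reverse, q.getVert_reverse, Sym2.eq_swap,
    show q.length - i = q.length - 1 - i + 1 by omega,
    show q.length - (i + 1) = q.length - 1 - i by omega]

lemma eoContains_pathEO {k : ℕ} {w : Fin k → ℝ} (hw : Function.Injective w) {u v : V}
    (q : G.graph.Walk u v) (hq : q.IsPath) (hlen : q.length + 1 = k)
    (hord : ∀ i j : Fin k, (i : ℕ) < q.length → (j : ℕ) < q.length → w i < w j →
      G.walkLabel q i < G.walkLabel q j) :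
    EOContains G (pathEO k w hw) := by
  refine ⟨fun i => q.getVert i,
    fun i j hij => Fin.ext (hq.getVert_injOn (by simp; omega) (by simp; omega) hij), ?_, ?_⟩
  · intro i j hij
    rcases SimpleGraph.pathGraph_adj.mp hij with h | h
    · simpa [← h] using q.adj_getVert_succ (i := i) (by omega)
    · simpa [← h] using (q.adj_getVert_succ (i := j) (by omega)).symm
  · intro e he e' he' hlt
    obtain ⟨i, i', rfl, hi⟩ := pathGraph_edge_form he
    obtain ⟨j, j', rfl, hj⟩ := pathGraph_edge_form he'
    rw [pathEO_label_mk hw hi, pathEO_label_mk hw hj] at hlt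
    have := hord i j (by omega) (by omega) hlt
    simpa [walkLabel, hi, hj] using this

section Pruning

open scoped Classical

variable (s : ℕ)

noncomputable def edgesAbove (F : Finset (Sym2 V)) (v : V) (a : ℝ) : Finset (Sym2 V) :=
  {f ∈ {f ∈ F | v ∈ f} | a < G.label f}

noncomputable def pruned : ℕ → Finset (Sym2 V)
  | 0 => G.graph.edgeFinset
  | j + 1 => {e ∈ pruned j | ∀ v ∈ e, s ≤ #(G.edgesAbove (pruned j) v (G.label e))}

variable {G s}

lemma mem_pruned_succ {j : ℕ} {e : Sym2 V} :
    e ∈ G.pruned s (j + 1) ↔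
      e ∈ G.pruned s j ∧ ∀ v ∈ e, s ≤ #(G.edgesAbove (G.pruned s j) v (G.label e)) := by
  simp [pruned]

lemma pruned_subset_edgeFinset (j : ℕ) : G.pruned s j ⊆ G.graph.edgeFinset := by
  induction j with
  | zero => exact subset_rfl
  | succ j ih => exact (filter_subset _ _).trans ih

lemma mem_edgeSet_of_mem_pruned {j : ℕ} {e : Sym2 V} (h : e ∈ G.pruned s j) :
    e ∈ G.graph.edgeSet :=
  SimpleGraph.mem_edgeFinset.mp (pruned_subset_edgeFinset j h)

lemma adj_of_mk_mem_pruned {j : ℕ} {u v : V} (h : s(u, v) ∈ G.pruned s j) : G.graph.Adj u v :=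
  mem_edgeSet_of_mem_pruned h

lemma card_pruned_le_card_pruned_succ_add (j : ℕ) :
    #(G.pruned s j) ≤ #(G.pruned s (j + 1)) + s * Fintype.card V := by
  set F := G.pruned s j
  let discarded : V → Finset (Sym2 V) := fun v =>
    {e ∈ {f ∈ F | v ∈ f} | #(G.edgesAbove F v (G.label e)) < s}
  have hsub : F ⊆ G.pruned s (j + 1) ∪ univ.biUnion discarded := by
    intro e he
    by_cases hkeep : ∀ v ∈ e, s ≤ #(G.edgesAbove F v (G.label e))
    · exact mem_union_left _ (mem_pruned_succ.mpr ⟨he, hkeep⟩)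
    · push Not at hkeep
      obtain ⟨v, hv, hlt⟩ := hkeep
      exact mem_union_right _ <|
        mem_biUnion.mpr ⟨v, mem_univ v, by simp [discarded, he, hv, hlt]⟩
  have hdiscarded : ∀ v, #(discarded v) ≤ s := fun v =>
    card_filter_card_filter_lt_lt_le _ (G.injOn_label.mono fun f hf =>
      mem_edgeSet_of_mem_pruned (mem_filter.mp (mem_coe.mp hf)).1) s
  calc #F ≤ #(G.pruned s (j + 1) ∪ univ.biUnion discarded) := card_le_card hsub
    _ ≤ #(G.pruned s (j + 1)) + ∑ v, #(discarded v) :=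
        (card_union_le _ _).trans (Nat.add_le_add_left card_biUnion_le _)
    _ ≤ #(G.pruned s (j + 1)) + ∑ _v : V, s := by gcongr with v; exact hdiscarded v
    _ = #(G.pruned s (j + 1)) + s * Fintype.card V := by
        rw [sum_const, card_univ, smul_eq_mul, mul_comm]

lemma card_edgeFinset_le_card_pruned_add (j : ℕ) :
    #G.graph.edgeFinset ≤ #(G.pruned s j) + j * (s * Fintype.card V) := by
  induction j with
  | zero => simp [pruned]
  | succ j ih => linarith [card_pruned_le_card_pruned_succ_add (G := G) (s := s) j]

lemma pruned_nonempty {j : ℕ} (hG : j * (s * Fintype.card V) < G.graph.edgeSet.ncard) :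
    (G.pruned s j).Nonempty := by
  rw [← SimpleGraph.coe_edgeFinset, Set.ncard_coe_finset] at hG
  have := card_edgeFinset_le_card_pruned_add (G := G) (s := s) j
  exact card_pos.mp (by omega)

lemma exists_mk_mem_pruned {j : ℕ} {v : V} {a : ℝ}
    (hv : s ≤ #(G.edgesAbove (G.pruned s j) v a)) {A : Finset V} (hA : #A < s) :
    ∃ w ∉ A, s(v, w) ∈ G.pruned s j ∧ a < G.label s(v, w) := by
  by_contra! h
  have hsub : G.edgesAbove (G.pruned s j) v a ⊆ A.image (fun w => s(v, w)) := by
    intro f hf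
    obtain ⟨⟨hfF, hvf⟩, haf⟩ : (f ∈ G.pruned s j ∧ v ∈ f) ∧ a < G.label f := by
      simpa [edgesAbove] using hf
    obtain ⟨w, rfl⟩ := Sym2.mem_iff_exists.mp hvf
    by_contra hw
    exact (h w (fun hwA => hw (mem_image_of_mem _ hwA)) hfF).not_gt haf
  have := (card_le_card hsub).trans card_image_le
  omega

lemma exists_isPath_of_le_card_edgesAbove (j : ℕ) :
    ∀ (v : V) (a : ℝ) (A : Finset V), v ∉ A → #A + j < s →
      s ≤ #(G.edgesAbove (G.pruned s j) v a) →
      ∃ (t : V) (q : G.graph.Walk v t), q.IsPath ∧ q.length = j + 1 ∧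
        (∀ x ∈ q.support, x ∉ A) ∧ a < G.walkLabel q 0 ∧
        ∀ i, i + 1 < q.length → G.walkLabel q i < G.walkLabel q (i + 1) := by
  induction j with
  | zero =>
    intro v a A hv hA hrich
    obtain ⟨w, hwA, hvw, haw⟩ := exists_mk_mem_pruned hrich (A := A) (by omega)
    have hadj := adj_of_mk_mem_pruned hvw
    refine ⟨w, .cons hadj .nil, by simpa using hadj.ne, rfl, ?_, by simpa using haw, by simp⟩
    simp [hv, hwA]
  | succ j ih =>
    intro v a A hv hA hrich
    obtain ⟨w, hwA, hvw, haw⟩ := exists_mk_mem_pruned hrich (A := A) (by omega)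
    have hadj := adj_of_mk_mem_pruned hvw
    obtain ⟨t, q, hq, hlen, hqA, hq0, hqsucc⟩ :=
      ih w _ (insert v A) (by simp [hadj.ne', hwA]) (by have := card_insert_le v A; omega)
        ((mem_pruned_succ.mp hvw).2 w (Sym2.mem_mk_right v w))
    refine ⟨t, .cons hadj q, ?_, by simp [hlen], ?_, by simpa using haw, ?_⟩
    · exact (SimpleGraph.Walk.cons_isPath_iff hadj q).mpr
        ⟨hq, fun h => hqA v h (mem_insert_self v A)⟩
    · simp only [SimpleGraph.Walk.support_cons, List.mem_cons, forall_eq_or_imp]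
      exact ⟨hv, fun x hx hxA => hqA x hx (mem_insert_of_mem hxA)⟩
    · rintro (_ | i) hi
      · simpa using hq0
      · simpa using hqsucc i (by simpa using hi)

lemma exists_isPath_strictMonoOn {K : ℕ} (hK : 0 < K)
    (hG : K * (K * Fintype.card V) < G.graph.edgeSet.ncard) :
    ∃ (u t : V) (q : G.graph.Walk u t), q.IsPath ∧ q.length = K ∧
      StrictMonoOn (G.walkLabel q) (Set.Iio K) := by
  obtain ⟨j, rfl⟩ : ∃ j, K = j + 1 := ⟨K - 1, by omega⟩
  obtain ⟨e, he⟩ := pruned_nonempty (s := j + 1) hG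
  induction e using Sym2.inductionOn with
  | hf x y =>
  obtain ⟨t, q, hq, hlen, -, -, hsucc⟩ := exists_isPath_of_le_card_edgesAbove j y _ ∅
    (notMem_empty y) (by simp) ((mem_pruned_succ.mp he).2 y (Sym2.mem_mk_right x y))
  refine ⟨y, t, q, hq, hlen, strictMonoOn_of_lt_add_one Set.ordConnected_Iio fun i _ _ hi => ?_⟩
  exact hsucc i (by simpa [hlen] using hi)

lemma exists_isPath_swap_zero_one_of_forall_le {j : ℕ} {x y : V} {b : Sym2 V}
    (hs : j + 2 < s) (hxy : s(x, y) ∈ G.pruned s (j + 1))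
    (hb : b ∈ G.edgesAbove (G.pruned s j) x (G.label s(x, y)))
    (hmin : ∀ f ∈ G.edgesAbove (G.pruned s j) y (G.label s(x, y)), G.label b ≤ G.label f) :
    ∃ (u t : V) (q : G.graph.Walk u t), q.IsPath ∧ q.length = j + 3 ∧
      StrictMonoOn (G.walkLabel q ∘ Equiv.swap 0 1) (Set.Iio (j + 3)) := by
  obtain ⟨⟨hbF, hxb⟩, hlb⟩ : (b ∈ G.pruned s j ∧ x ∈ b) ∧ G.label s(x, y) < G.label b := by
    simpa [edgesAbove] using hb
  obtain ⟨w, rfl⟩ := Sym2.mem_iff_exists.mp hxb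
  have hxw := adj_of_mk_mem_pruned hbF
  have hxy' := adj_of_mk_mem_pruned hxy
  have hwy : w ≠ y := by rintro rfl; exact hlb.false
  -- by the minimality of `b`, every edge counted at `y` above `xy` is also above `b`
  have hrich : s ≤ #(G.edgesAbove (G.pruned s j) y (G.label s(x, w))) := by
    refine ((mem_pruned_succ.mp hxy).2 y (Sym2.mem_mk_right x y)).trans <|
      card_le_card fun f hf => ?_
    obtain ⟨⟨hfF, hyf⟩, -⟩ : (f ∈ G.pruned s j ∧ y ∈ f) ∧ G.label s(x, y) < G.label f := by
      simpa [edgesAbove] using hf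
    refine mem_filter.mpr ⟨mem_filter.mpr ⟨hfF, hyf⟩, (hmin f hf).lt_of_ne fun h => ?_⟩
    have hfb : s(x, w) = f :=
      G.injOn_label (mem_edgeSet_of_mem_pruned hbF) (mem_edgeSet_of_mem_pruned hfF) h
    rcases Sym2.mem_iff.mp (hfb ▸ hyf) with h | h
    · exact hxy'.ne h.symm
    · exact hwy h.symm
  obtain ⟨t, q, hq, hlen, hqA, hq0, hqsucc⟩ :=
    exists_isPath_of_le_card_edgesAbove j y _ {x, w} (by simp [hxy'.ne', hwy.symm])
      (by have := card_le_two (a := x) (b := w); omega) hrich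
  refine ⟨w, t, .cons hxw.symm (.cons hxy' q), ?_, by simp [hlen], ?_⟩
  · simp only [SimpleGraph.Walk.cons_isPath_iff, SimpleGraph.Walk.support_cons, List.mem_cons,
      not_or, hq, true_and]
    exact ⟨fun h => hqA x h (by simp), hxw.ne', fun h => hqA w h (by simp)⟩
  · refine strictMonoOn_of_lt_add_one Set.ordConnected_Iio fun i _ _ hi => ?_
    rcases i with _ | _ | i
    · simpa [Sym2.eq_swap] using hlb
    · simpa [Equiv.swap_apply_of_ne_of_ne, Sym2.eq_swap] using hq0
    · have := hqsucc i (by simp at hi; omega)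
      simpa [Equiv.swap_apply_of_ne_of_ne] using this

lemma exists_isPath_swap_zero_one {K : ℕ} (hK : 3 ≤ K)
    (hG : K * (K * Fintype.card V) < G.graph.edgeSet.ncard) :
    ∃ (u t : V) (q : G.graph.Walk u t), q.IsPath ∧ q.length = K ∧
      StrictMonoOn (G.walkLabel q ∘ Equiv.swap 0 1) (Set.Iio K) := by
  obtain ⟨j, rfl⟩ : ∃ j, K = j + 3 := ⟨K - 3, by omega⟩
  obtain ⟨e, he⟩ := pruned_nonempty (s := j + 3) (j := j + 1)
    (lt_of_le_of_lt (Nat.mul_le_mul_right _ (by omega)) hG)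
  induction e using Sym2.inductionOn with
  | hf x y =>
  have hx := (mem_pruned_succ.mp he).2 x (Sym2.mem_mk_left x y)
  have hy := (mem_pruned_succ.mp he).2 y (Sym2.mem_mk_right x y)
  obtain ⟨b, hb, hmin⟩ := exists_min_image
    (G.edgesAbove (G.pruned (j + 3) j) x (G.label s(x, y)) ∪
      G.edgesAbove (G.pruned (j + 3) j) y (G.label s(x, y))) G.label
    ((card_pos.mp (by omega)).mono subset_union_left)
  rcases mem_union.mp hb with hb | hb
  · exact exists_isPath_swap_zero_one_of_forall_le (by omega) he hb
      fun f hf => hmin f (mem_union_right _ hf)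
  · rw [Sym2.eq_swap] at he hb hmin
    exact exists_isPath_swap_zero_one_of_forall_le (by omega) he hb
      fun f hf => hmin f (mem_union_left _ hf)

lemma exists_isPath_swap_sub_two_sub_one {K : ℕ} (hK : 3 ≤ K)
    (hG : K * (K * Fintype.card V) < G.graph.edgeSet.ncard) :
    ∃ (u t : V) (q : G.graph.Walk u t), q.IsPath ∧ q.length = K ∧
      StrictMonoOn (G.walkLabel q ∘ Equiv.swap (K - 2) (K - 1)) (Set.Iio K) := by
  -- `G.reverse` has the same underlying graph as `G`
  obtain ⟨u, t, (q : G.graph.Walk u t), hq, hlen, hmono⟩ :=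
    exists_isPath_swap_zero_one (G := G.reverse) hK hG
  replace hlen : q.length = K := hlen
  refine ⟨t, u, q.reverse, hq.reverse, by simpa using hlen, fun i hi i' hi' hii' => ?_⟩
  have hσ : ∀ i ∈ Set.Iio K, Equiv.swap (K - 2) (K - 1) i < K := fun i hi => by
    simp only [Equiv.swap_apply_def]
    split_ifs <;> simp at hi <;> omega
  simp only [Function.comp_apply]
  rw [G.walkLabel_reverse q (hlen ▸ hσ i hi), G.walkLabel_reverse q (hlen ▸ hσ i' hi'),
    hlen, sub_swap_eq_swap_sub (by omega) hi, sub_swap_eq_swap_sub (by omega) hi']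
  simp only [Set.mem_Iio] at hi hi'
  exact neg_lt_neg_iff.mp (hmono (show K - 1 - i' < K by omega) (show K - 1 - i < K by omega)
    (by omega))

end Pruning

end EOGraph

lemma EOIsoTo.ncard_edgeSet_eq {V W : Type} [Fintype V] [Fintype W] {H : EOGraph W}
    {G : EOGraph V} (h : EOIsoTo H G) : G.graph.edgeSet.ncard = H.graph.edgeSet.ncard := by
  obtain ⟨f, hadj, -⟩ := h
  let φ : H.graph ≃g G.graph := ⟨f, (hadj _ _).symm⟩
  rw [← Nat.card_coe_set_eq, ← Nat.card_coe_set_eq]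
  exact Nat.card_congr φ.mapEdgeSet.symm

lemma ncard_edgeSet_pathGraph_le_one {k : ℕ} (hk : k ≤ 2) :
    (SimpleGraph.pathGraph k).edgeSet.ncard ≤ 1 := by
  refine (Set.ncard_le_one_iff (Set.toFinite _)).mpr fun he he' => ?_
  obtain ⟨i, i', rfl, hi⟩ := pathGraph_edge_form he
  obtain ⟨j, j', rfl, hj⟩ := pathGraph_edge_form he'
  have := i'.is_lt
  have := j'.is_lt
  rw [Fin.ext (show (i : ℕ) = j by omega), Fin.ext (show (i' : ℕ) = j' by omega)]

lemma EOIsoTo.three_le {V : Type} [Fintype V] {P : EOGraph V} {k : ℕ} {w : Fin k → ℝ}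
    {hw : Function.Injective w} (iso : EOIsoTo (pathEO k w hw) P)
    (h2 : 2 ≤ P.graph.edgeSet.ncard) : 3 ≤ k := by
  by_contra! hk
  have := ncard_edgeSet_pathGraph_le_one (k := k) (by omega)
  have := iso.ncard_edgeSet_eq
  simp only [pathEO] at this
  omega

lemma EOIsoTo.exists_adj_adj {V : Type} [Fintype V] {P : EOGraph V} {k : ℕ} {w : Fin k → ℝ}
    {hw : Function.Injective w} (iso : EOIsoTo (pathEO k w hw) P) (hk : 3 ≤ k) :
    ∃ x y z, P.graph.Adj y x ∧ P.graph.Adj y z ∧ x ≠ z := by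
  obtain ⟨f, hadj, -⟩ := iso
  refine ⟨f ⟨0, by omega⟩, f ⟨1, by omega⟩, f ⟨2, by omega⟩, (hadj _ _).mp ?_, (hadj _ _).mp ?_,
    fun h => by simpa using f.injective h⟩ <;>
  simp [pathEO, SimpleGraph.pathGraph_adj]

lemma exists_eoIsoTo_pathEO {V : Type} [Fintype V] {P : EOGraph V}
    (h : IsMonotonePath P ∨ IsFlippedPath P) :
    ∃ (k : ℕ) (w : Fin k → ℝ) (hw : Function.Injective w), EOIsoTo (pathEO k w hw) P := by
  rcases h with ⟨k, w, hw, -, iso⟩ | ⟨k, _, w, hw, iso | iso⟩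
  · exact ⟨_, _, _, iso⟩
  · exact ⟨_, _, _, iso⟩
  · exact ⟨_, _, _, iso⟩

def EOGraph.HasLinearExtremalBound {W : Type} [Fintype W] (P : EOGraph W) : Prop :=
  ∃ C : ℕ, ∀ (V : Type) [Fintype V] (G : EOGraph V),
    C * Fintype.card V < G.graph.edgeSet.ncard → EOContains G P

lemma IsMonotonePath.hasLinearExtremalBound {W : Type} [Fintype W] {P : EOGraph W}
    (hP : IsMonotonePath P) (h2 : 2 ≤ P.graph.edgeSet.ncard) : P.HasLinearExtremalBound := by
  obtain ⟨k, w, hw, hmono, iso⟩ := hP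
  have hk := iso.three_le h2
  refine ⟨(k - 1) * (k - 1), fun V _ G hG => EOContains.trans_eoIsoTo ?_ iso⟩
  rw [mul_assoc] at hG
  rcases hmono with hinc | hdec
  · obtain ⟨_, _, q, hq, hlen, hℓ⟩ := G.exists_isPath_strictMonoOn (by omega) hG
    exact G.eoContains_pathEO hw q hq (by omega) fun i j hi hj hij =>
      hℓ (hlen ▸ hi) (hlen ▸ hj) (hinc.lt_iff_lt.mp hij)
  · obtain ⟨_, _, (q : G.graph.Walk _ _), hq, hlen, hℓ⟩ :=
      G.reverse.exists_isPath_strictMonoOn (by omega) hG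
    replace hlen : q.length = k - 1 := hlen
    exact G.eoContains_pathEO hw q hq (by omega) fun i j hi hj hij =>
      neg_lt_neg_iff.mp (hℓ (hlen ▸ hj) (hlen ▸ hi) (hdec.lt_iff_gt.mp hij))

lemma IsFlippedPath.hasLinearExtremalBound {W : Type} [Fintype W] {P : EOGraph W}
    (hP : IsFlippedPath P) : P.HasLinearExtremalBound := by
  obtain ⟨k, hk, w, hw, hiso⟩ := hP
  refine ⟨(k - 1) * (k - 1), fun V _ G hG => ?_⟩
  rw [mul_assoc] at hG
  rcases hiso with iso | iso
  · obtain ⟨_, _, q, hq, hlen, hℓ⟩ := G.exists_isPath_swap_zero_one (by omega) hG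
    refine EOContains.trans_eoIsoTo ?_ iso
    exact G.eoContains_pathEO _ q hq (by omega) fun i j hi hj hij =>
      lt_of_lt_comp_swap hw (by simp; omega) (by simp; omega) hℓ (by omega) (by omega) hij
  · obtain ⟨_, _, q, hq, hlen, hℓ⟩ := G.exists_isPath_swap_sub_two_sub_one (by omega) hG
    rw [show k - 1 - 2 = k - 3 by omega, show k - 1 - 1 = k - 2 by omega] at hℓ
    refine EOContains.trans_eoIsoTo ?_ iso
    exact G.eoContains_pathEO _ q hq (by omega) fun i j hi hj hij =>
      lt_of_lt_comp_swap hw (by simp; omega) (by simp; omega) hℓ (by omega) (by omega) hij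

lemma not_eoContains_of_adj_adj {U V : Type} [Fintype U] [Fintype V] {G : EOGraph U}
    {P : EOGraph V} (hG : ∀ a b c, G.graph.Adj a b → G.graph.Adj a c → b = c) {x y z : V}
    (hyx : P.graph.Adj y x) (hyz : P.graph.Adj y z) (hxz : x ≠ z) : ¬EOContains G P := by
  rintro ⟨f, hf, hadj, -⟩
  exact hxz (hf (hG _ _ _ (hadj _ _ hyx) (hadj _ _ hyz)))

def pairingGraph (n : ℕ) : SimpleGraph (Fin n) where
  Adj a b := a ≠ b ∧ (a : ℕ) / 2 = (b : ℕ) / 2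
  symm := ⟨fun _ _ h => ⟨h.1.symm, h.2.symm⟩⟩
  loopless := ⟨fun _ h => h.1 rfl⟩

@[simp]
lemma pairingGraph_adj {n : ℕ} {a b : Fin n} :
    (pairingGraph n).Adj a b ↔ a ≠ b ∧ (a : ℕ) / 2 = (b : ℕ) / 2 :=
  Iff.rfl

lemma pairingGraph_eq_of_adj_of_adj {n : ℕ} {a b c : Fin n} (hab : (pairingGraph n).Adj a b)
    (hac : (pairingGraph n).Adj a c) : b = c := by
  obtain ⟨hab, h1⟩ := pairingGraph_adj.mp hab
  obtain ⟨hac, h2⟩ := pairingGraph_adj.mp hac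
  have := Fin.val_injective.ne hab
  have := Fin.val_injective.ne hac
  ext
  omega

lemma le_ncard_edgeSet_pairingGraph (n : ℕ) : n / 2 ≤ (pairingGraph n).edgeSet.ncard := by
  let F : Fin (n / 2) → Sym2 (Fin n) := fun i =>
    s(⟨2 * i, by have := i.is_lt; omega⟩, ⟨2 * i + 1, by have := i.is_lt; omega⟩)
  have hF : Function.Injective F := by
    intro i j h
    simp only [F, Sym2.eq_iff, Fin.ext_iff] at h
    ext
    omega
  calc n / 2 = (Set.range F).ncard := by rw [Set.ncard_range_of_injective hF, Nat.card_fin]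
    _ ≤ _ := Set.ncard_le_ncard (Set.range_subset_iff.mpr fun i =>
        by simp [F, Fin.ext_iff]; omega) (Set.toFinite _)

noncomputable def EOGraph.ofGraph {V : Type} [Fintype V] [DecidableEq V] (H : SimpleGraph V) :
    EOGraph V where
  graph := H
  label e := (Fintype.equivFin (Sym2 V) e : ℕ)
  inj _ _ _ _ h := (Fintype.equivFin _).injective (Fin.ext (by exact_mod_cast h))

lemma exLT_le {W : Type} [Fintype W] {P : EOGraph W} {n M : ℕ}
    (h : ∀ G : EOGraph (Fin n), ¬EOContains G P → G.graph.edgeSet.ncard ≤ M) : exLT n P ≤ M :=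
  csSup_le' (by rintro _ ⟨G, hG, rfl⟩; exact h G hG)

lemma le_exLT {W : Type} [Fintype W] {P : EOGraph W} {n M : ℕ}
    (h : ∀ G : EOGraph (Fin n), ¬EOContains G P → G.graph.edgeSet.ncard ≤ M)
    {G : EOGraph (Fin n)} (hG : ¬EOContains G P) : G.graph.edgeSet.ncard ≤ exLT n P :=
  le_csSup ⟨M, by rintro _ ⟨G, hG, rfl⟩; exact h G hG⟩ ⟨G, hG, rfl⟩

theorem stmt_9_general {V : Type} [Fintype V] (P : EOGraph V)
    (h2 : 2 ≤ P.graph.edgeSet.ncard) (h : IsMonotonePath P ∨ IsFlippedPath P) :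
    ∃ c C : ℝ, 0 < c ∧ 0 < C ∧ ∃ N : ℕ, ∀ n : ℕ, N ≤ n →
      c * n ≤ (exLT n P : ℝ) ∧ (exLT n P : ℝ) ≤ C * n := by
  obtain ⟨C, hC⟩ : P.HasLinearExtremalBound :=
    h.elim (·.hasLinearExtremalBound h2) (·.hasLinearExtremalBound)
  have hfree : ∀ n (G : EOGraph (Fin n)), ¬EOContains G P → G.graph.edgeSet.ncard ≤ C * n :=
    fun n G hG => by simpa using not_lt.mp (mt (hC _ G) hG)
  obtain ⟨k, w, hw, iso⟩ := exists_eoIsoTo_pathEO h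
  obtain ⟨x, y, z, hyx, hyz, hxz⟩ := iso.exists_adj_adj (iso.three_le h2)
  refine ⟨1 / 4, C + 1, by norm_num, by positivity, 2, fun n hn => ⟨?_, ?_⟩⟩
  · have hlow : n / 2 ≤ exLT n P := (le_ncard_edgeSet_pairingGraph n).trans <|
      le_exLT (hfree n) (G := EOGraph.ofGraph (pairingGraph n))
        (not_eoContains_of_adj_adj (fun _ _ _ => pairingGraph_eq_of_adj_of_adj) hyx hyz hxz)
    have : (n : ℝ) ≤ 4 * (n / 2 : ℕ) := by exact_mod_cast (by omega : n ≤ 4 * (n / 2))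
    have : ((n / 2 : ℕ) : ℝ) ≤ exLT n P := by exact_mod_cast hlow
    linarith
  · have : (exLT n P : ℝ) ≤ C * n := by exact_mod_cast exLT_le (hfree n)
    nlinarith [(n.cast_nonneg : (0 : ℝ) ≤ n)]

/-- If an edge-ordered path `P` with at least two edges is monotone or flipped,
then `ex_<(n, P) = Θ(n)`. -/
theorem stmt_9 {V : Type} [Fintype V] (P : EOGraph V) (hpath : IsPathEO P)
    (h2 : 2 ≤ P.graph.edgeSet.ncard) (h : IsMonotonePath P ∨ IsFlippedPath P) :
    ∃ c C : ℝ, 0 < c ∧ 0 < C ∧ ∃ N : ℕ, ∀ n : ℕ, N ≤ n →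
      c * n ≤ (exLT n P : ℝ) ∧ (exLT n P : ℝ) ≤ C * n :=
  stmt_9_general P h2 h
end

section
/- Let H be a non-trivial edge-ordered graph and let H' be the edge-ordered graph obtained from H by adding one new vertex and a single new edge connecting one end of the smallest edge of H to the new vertex, where the new edge is smaller than every edge of H. Then ex_<(n, H') = ex_<(n, H) + O(n): ex_<(n, H) ≤ ex_<(n, H') and there is a constant C > 0 with ex_<(n, H') ≤ ex_<(n, H) + C·n for all n. -/
set_option maxHeartbeats 1000000

section StmtElevenAux

/-- The set of edges at `v` smaller than `e`. -/
def smallerAt {n : ℕ} (G : EOGraph (Fin n)) (v : Fin n) (e : Sym2 (Fin n)) :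
    Set (Sym2 (Fin n)) :=
  {f | f ∈ G.graph.edgeSet ∧ v ∈ f ∧ G.label f < G.label e}

lemma smallerAt_mono {n : ℕ} {G : EOGraph (Fin n)} {v : Fin n} {e e' : Sym2 (Fin n)}
    (he : e ∈ G.graph.edgeSet) (hv : v ∈ e) (h : G.label e < G.label e') :
    (smallerAt G v e).ncard < (smallerAt G v e').ncard := by
  have hsub : insert e (smallerAt G v e) ⊆ smallerAt G v e' := by
    intro f hf
    rcases Set.mem_insert_iff.mp hf with rfl | hf
    · exact ⟨he, hv, h⟩
    · exact ⟨hf.1, hf.2.1, hf.2.2.trans h⟩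
  have hne : e ∉ smallerAt G v e := fun hf => lt_irrefl _ hf.2.2
  calc (smallerAt G v e).ncard < (insert e (smallerAt G v e)).ncard := by
        rw [Set.ncard_insert_of_notMem hne (Set.toFinite _)]; omega
    _ ≤ _ := Set.ncard_le_ncard hsub (Set.toFinite _)

lemma smallerAt_inj {n : ℕ} {G : EOGraph (Fin n)} {v : Fin n} {e e' : Sym2 (Fin n)}
    (he : e ∈ G.graph.edgeSet) (hv : v ∈ e) (he' : e' ∈ G.graph.edgeSet) (hv' : v ∈ e')
    (h : (smallerAt G v e).ncard = (smallerAt G v e').ncard) : e = e' := by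
  rcases lt_trichotomy (G.label e) (G.label e') with hl | hl | hl
  · exact absurd h (smallerAt_mono he hv hl).ne
  · exact G.inj e he e' he' hl
  · exact absurd h.symm (smallerAt_mono he' hv' hl).ne

/-- Remove, at each vertex, the `c` smallest incident edges. -/
def prune {n : ℕ} (G : EOGraph (Fin n)) (c : ℕ) : EOGraph (Fin n) where
  graph := SimpleGraph.fromEdgeSet
    {e | e ∈ G.graph.edgeSet ∧ ∀ v ∈ e, c ≤ (smallerAt G v e).ncard}
  label := G.label
  inj := by
    intro e he f hf h
    rw [SimpleGraph.edgeSet_fromEdgeSet] at he hf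
    exact G.inj e he.1.1 f hf.1.1 h

lemma prune_edgeSet {n : ℕ} (G : EOGraph (Fin n)) (c : ℕ) :
    (prune G c).graph.edgeSet =
      {e | e ∈ G.graph.edgeSet ∧ ∀ v ∈ e, c ≤ (smallerAt G v e).ncard} \ {e | e.IsDiag} :=
  SimpleGraph.edgeSet_fromEdgeSet _

lemma prune_adj {n : ℕ} {G : EOGraph (Fin n)} {c : ℕ} {p q : Fin n}
    (h : (prune G c).graph.Adj p q) : G.graph.Adj p q := by
  have hm : s(p, q) ∈ (prune G c).graph.edgeSet := h
  rw [prune_edgeSet] at hm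
  exact hm.1.1

lemma prune_card_le {n : ℕ} (G : EOGraph (Fin n)) (c : ℕ) :
    G.graph.edgeSet.ncard ≤ (prune G c).graph.edgeSet.ncard + n * c := by
  classical
  set D := G.graph.edgeSet \ (prune G c).graph.edgeSet with hD
  have key : ∀ e ∈ D, ∃ v, v ∈ e ∧ (smallerAt G v e).ncard < c := by
    intro e he
    by_contra hcon
    push_neg at hcon
    apply he.2
    rw [prune_edgeSet]
    exact ⟨⟨he.1, fun v hv => le_of_not_gt (fun hlt => absurd hlt (not_lt.mpr (hcon v hv)))⟩,
      G.graph.not_isDiag_of_mem_edgeSet he.1⟩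
  have hDcard : D.ncard ≤ n * c := by
    have h1 : Nat.card D ≤ Nat.card (Fin n × Fin c) := by
      apply Nat.card_le_card_of_injective
        (f := fun x : D => ((key x.1 x.2).choose,
          (⟨(smallerAt G (key x.1 x.2).choose x.1).ncard,
            (key x.1 x.2).choose_spec.2⟩ : Fin c)))
      intro a b hab
      dsimp only at hab
      obtain ⟨hva, _⟩ := (key a.1 a.2).choose_spec
      obtain ⟨hvb, _⟩ := (key b.1 b.2).choose_spec
      simp only [Prod.mk.injEq] at hab
      obtain ⟨h1, h2⟩ := hab
      have h2' := congrArg Fin.val h2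
      dsimp only at h2'
      rw [← h1] at hvb h2'
      exact Subtype.ext (smallerAt_inj a.2.1 hva b.2.1 hvb h2')
    rw [← Nat.card_coe_set_eq]
    calc Nat.card D ≤ Nat.card (Fin n × Fin c) := h1
      _ = n * c := by simp [Nat.card_eq_fintype_card]
  calc G.graph.edgeSet.ncard
      ≤ ((prune G c).graph.edgeSet ∪ D).ncard := by
        apply Set.ncard_le_ncard _ (Set.toFinite _)
        intro e he
        by_cases hP : e ∈ (prune G c).graph.edgeSet
        · exact Or.inl hP
        · exact Or.inr ⟨he, hP⟩
    _ ≤ (prune G c).graph.edgeSet.ncard + D.ncard := Set.ncard_union_le _ _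
    _ ≤ _ := by omega

lemma edge_card_bound {n : ℕ} (G : EOGraph (Fin n)) :
    G.graph.edgeSet.ncard ≤ Fintype.card (Sym2 (Fin n)) := by
  calc G.graph.edgeSet.ncard ≤ (Set.univ : Set (Sym2 (Fin n))).ncard :=
        Set.ncard_le_ncard (Set.subset_univ _) Set.finite_univ
    _ = _ := by rw [Set.ncard_univ, Nat.card_eq_fintype_card]

lemma exLT_bddAbove {W : Type} [Fintype W] (n : ℕ) (K : EOGraph W) :
    BddAbove {m | ∃ G : EOGraph (Fin n), ¬ EOContains G K ∧ G.graph.edgeSet.ncard = m} := by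
  refine ⟨Fintype.card (Sym2 (Fin n)), ?_⟩
  rintro m ⟨G, -, rfl⟩
  exact edge_card_bound G

end StmtElevenAux

/-- Let `H'` be obtained from a non-trivial edge-ordered graph `H` by adding a
single new edge, smaller than every edge of `H`, connecting one end of the smallest edge of
`H` to a new vertex. Then `ex_<(n, H') = ex_<(n, H) + O(n)`. -/
theorem stmt_11 {V V' : Type} [Fintype V] [Fintype V'] (H : EOGraph V) (H' : EOGraph V')
    (hNT : H.graph.edgeSet.Nonempty)
    (ι : V → V') (hι : Function.Injective ι) (x y : V) (w : V')
    (hxy : H.graph.Adj x y)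
    (hmin : ∀ e ∈ H.graph.edgeSet, H.label s(x, y) ≤ H.label e)
    (hw : w ∉ Set.range ι)
    (hcover : ∀ u : V', u ∈ Set.range ι ∨ u = w)
    (hadj : ∀ a b, H.graph.Adj a b ↔ H'.graph.Adj (ι a) (ι b))
    (hord : ∀ e ∈ H.graph.edgeSet, ∀ f ∈ H.graph.edgeSet,
      (H.label e < H.label f ↔ H'.label (Sym2.map ι e) < H'.label (Sym2.map ι f)))
    (hwadj : ∀ u, H'.graph.Adj w u ↔ u = ι x)
    (hsmall : ∀ e ∈ H.graph.edgeSet, H'.label s(w, ι x) < H'.label (Sym2.map ι e)) :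
    (∀ n : ℕ, exLT n H ≤ exLT n H') ∧
      ∃ C : ℝ, 0 < C ∧ ∀ n : ℕ, (exLT n H' : ℝ) ≤ (exLT n H : ℝ) + C * n := by
  classical
  have hxyE : s(x, y) ∈ H.graph.edgeSet := (SimpleGraph.mem_edgeSet _).mpr hxy
  -- edges of H' are images of edges of H, plus the extra edge s(w, ι x)
  have hedge : ∀ e ∈ H'.graph.edgeSet,
      (∃ e₀ ∈ H.graph.edgeSet, e = Sym2.map ι e₀) ∨ e = s(w, ι x) := by
    intro e he
    induction e using Sym2.inductionOn with
    | hf a b =>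
      rw [SimpleGraph.mem_edgeSet] at he
      rcases hcover a with ⟨a₀, rfl⟩ | rfl
      · rcases hcover b with ⟨b₀, rfl⟩ | rfl
        · exact Or.inl ⟨s(a₀, b₀), (SimpleGraph.mem_edgeSet _).mpr ((hadj a₀ b₀).mpr he),
            (Sym2.map_pair_eq ι a₀ b₀).symm⟩
        · have hax : ι a₀ = ι x := (hwadj (ι a₀)).mp he.symm
          exact Or.inr (by rw [hax]; exact Sym2.eq_swap)
      · rcases hcover b with ⟨b₀, rfl⟩ | rfl
        · have hbx : ι b₀ = ι x := (hwadj (ι b₀)).mp he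
          exact Or.inr (by rw [hbx])
        · exact absurd he (H'.graph.irrefl)
  have hmapmem : ∀ e₀ ∈ H.graph.edgeSet, Sym2.map ι e₀ ∈ H'.graph.edgeSet := by
    intro e₀ he₀
    induction e₀ using Sym2.inductionOn with
    | hf a b =>
      rw [SimpleGraph.mem_edgeSet] at he₀
      rw [Sym2.map_pair_eq, SimpleGraph.mem_edgeSet]
      exact (hadj a b).mp he₀
  constructor
  · -- ex(n, H) ≤ ex(n, H')
    intro n
    apply csSup_le'
    rintro m ⟨G, hG, rfl⟩
    apply le_csSup (exLT_bddAbove n H')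
    refine ⟨G, ?_, rfl⟩
    rintro ⟨g, ginj, gadj, gord⟩
    apply hG
    refine ⟨g ∘ ι, ginj.comp hι, ?_, ?_⟩
    · intro a b hab
      exact gadj (ι a) (ι b) ((hadj a b).mp hab)
    · intro e he e' he' hlt
      have := gord (Sym2.map ι e) (hmapmem e he) (Sym2.map ι e') (hmapmem e' he')
        ((hord e he e' he').mp hlt)
      rwa [Sym2.map_map, Sym2.map_map] at this
  · -- ex(n, H') ≤ ex(n, H) + C n
    set c : ℕ := Fintype.card V + 1 with hc
    refine ⟨(c : ℝ), by positivity, fun n => ?_⟩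
    have hnat : exLT n H' ≤ exLT n H + n * c := by
      apply csSup_le'
      rintro m ⟨G, hGavoid, rfl⟩
      -- the pruned graph avoids H
      have hpruneAvoid : ¬ EOContains (prune G c) H := by
        rintro ⟨f, finj, fadj, ford⟩
        -- the image of the minimal edge survives pruning, so f x has c smaller edges
        have hm : s(f x, f y) ∈ (prune G c).graph.edgeSet :=
          (SimpleGraph.mem_edgeSet _).mpr (fadj x y hxy)
        rw [prune_edgeSet] at hm
        have hSc : c ≤ (smallerAt G (f x) s(f x, f y)).ncard :=
          hm.1.2 (f x) (Sym2.mem_mk_left _ _)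
        -- extract c distinct neighbors of f x via small edges
        set T : Set (Fin n) :=
          {u | G.graph.Adj (f x) u ∧ G.label s(f x, u) < G.label s(f x, f y)} with hT
        have hST : smallerAt G (f x) s(f x, f y) ⊆ (fun u => s(f x, u)) '' T := by
          rintro g ⟨hgE, hgv, hglt⟩
          obtain ⟨o, ho⟩ : ∃ o, s(f x, o) = g := ⟨Sym2.Mem.other hgv, Sym2.other_spec hgv⟩
          refine ⟨o, ⟨?_, ?_⟩, ho⟩
          · rw [← SimpleGraph.mem_edgeSet, ho]; exact hgE
          · rw [ho]; exact hglt
        have hTc : c ≤ T.ncard := by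
          calc c ≤ (smallerAt G (f x) s(f x, f y)).ncard := hSc
            _ ≤ ((fun u => s(f x, u)) '' T).ncard := Set.ncard_le_ncard hST (Set.toFinite _)
            _ ≤ T.ncard := Set.ncard_image_le (Set.toFinite _)
        -- some such neighbor avoids the image of f
        have hu : ∃ u ∈ T, u ∉ Set.range f := by
          by_contra hcon
          push_neg at hcon
          have hsub : T ⊆ Set.range f := hcon
          have : T.ncard ≤ Fintype.card V := by
            calc T.ncard ≤ (Set.range f).ncard := Set.ncard_le_ncard hsub (Set.toFinite _)
              _ ≤ (Set.univ : Set V).ncard := by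
                  rw [← Set.image_univ]; exact Set.ncard_image_le (Set.toFinite _)
              _ = Fintype.card V := by rw [Set.ncard_univ, Nat.card_eq_fintype_card]
          omega
        obtain ⟨u, ⟨hAdju, hlab⟩, hu⟩ := hu
        -- build the embedding of H' into G
        set g : V' → Fin n := fun a => if h : ∃ v, ι v = a then f h.choose else u with hg
        have hgι : ∀ v, g (ι v) = f v := by
          intro v
          have h : ∃ v', ι v' = ι v := ⟨v, rfl⟩
          rw [hg]
          dsimp only
          rw [dif_pos h]
          exact congrArg f (hι h.choose_spec)
        have hgw : g w = u := by
          rw [hg]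
          dsimp only
          rw [dif_neg]
          rintro ⟨v, hv⟩
          exact hw ⟨v, hv⟩
        have hmapg : ∀ e₀ : Sym2 V, Sym2.map g (Sym2.map ι e₀) = Sym2.map f e₀ := by
          intro e₀
          rw [Sym2.map_map]
          have : g ∘ ι = f := funext hgι
          rw [this]
        have hmapwx : Sym2.map g s(w, ι x) = s(u, f x) := by
          rw [Sym2.map_pair_eq, hgw, hgι]
        -- labels in G of images under f: minimal edge maps to a minimum
        have hGmin : ∀ e₀ ∈ H.graph.edgeSet,
            G.label s(f x, f y) ≤ G.label (Sym2.map f e₀) := by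
          intro e₀ he₀
          rcases eq_or_lt_of_le (hmin e₀ he₀) with heq | hlt
          · have : s(x, y) = e₀ := H.inj _ hxyE _ he₀ heq
            rw [← this, Sym2.map_pair_eq]
          · have := ford s(x, y) hxyE e₀ he₀ hlt
            rw [Sym2.map_pair_eq] at this
            exact le_of_lt this
        apply hGavoid
        refine ⟨g, ?_, ?_, ?_⟩
        · -- injectivity
          intro a b hab
          rcases hcover a with ⟨a₀, rfl⟩ | rfl <;> rcases hcover b with ⟨b₀, rfl⟩ | rfl
          · rw [hgι, hgι] at hab
            exact congrArg ι (finj hab)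
          · rw [hgι, hgw] at hab
            exact absurd ⟨a₀, hab⟩ hu
          · rw [hgw, hgι] at hab
            exact absurd ⟨b₀, hab.symm⟩ hu
          · rfl
        · -- adjacency
          intro a b hab
          rcases hcover a with ⟨a₀, rfl⟩ | rfl <;> rcases hcover b with ⟨b₀, rfl⟩ | rfl
          · rw [hgι, hgι]
            exact prune_adj (fadj a₀ b₀ ((hadj a₀ b₀).mpr hab))
          · have hax : a₀ = x := hι ((hwadj (ι a₀)).mp hab.symm)
            rw [hgι, hgw, hax]
            exact hAdju
          · have hbx : b₀ = x := hι ((hwadj (ι b₀)).mp hab)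
            rw [hgw, hgι, hbx]
            exact hAdju.symm
          · exact absurd hab (H'.graph.irrefl)
        · -- order
          intro e he e' he' hlt
          rcases hedge e he with ⟨e₀, he₀, rfl⟩ | rfl <;>
            rcases hedge e' he' with ⟨e₀', he₀', rfl⟩ | rfl
          · rw [hmapg, hmapg]
            exact ford e₀ he₀ e₀' he₀' ((hord e₀ he₀ e₀' he₀').mpr hlt)
          · exact absurd hlt (asymm (hsmall e₀ he₀))
          · rw [hmapwx, hmapg]
            calc G.label s(u, f x) = G.label s(f x, u) := by rw [Sym2.eq_swap]
              _ < G.label s(f x, f y) := hlab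
              _ ≤ G.label (Sym2.map f e₀') := hGmin e₀' he₀'
          · exact absurd hlt (lt_irrefl _)
      have h1 : (prune G c).graph.edgeSet.ncard ≤ exLT n H :=
        le_csSup (exLT_bddAbove n H) ⟨prune G c, hpruneAvoid, rfl⟩
      have h2 := prune_card_le G c
      omega
    calc (exLT n H' : ℝ) ≤ ((exLT n H + n * c : ℕ) : ℝ) := by exact_mod_cast hnat
      _ = (exLT n H : ℝ) + (c : ℝ) * n := by push_cast; ring
end

section
/- Every edge-ordered bigraph G on n vertices has at most 2n non-inclined edges. -/
set_option maxHeartbeats 1000000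

lemma secondLabel_le {V : Type} [Fintype V] (G : EOGraph V) (v : V) {e f : Sym2 V}
    (he : e ∈ G.graph.edgeSet) (hve : v ∈ e) (hf : f ∈ G.graph.edgeSet) (hvf : v ∈ f)
    (hlt : G.label f < G.label e) : secondLabel G v ≤ G.label e := by
  have hfin : (incidentLabels G v).Finite := Set.Finite.image _ (Set.toFinite _)
  have hme : G.label e ∈ incidentLabels G v := ⟨e, ⟨he, hve⟩, rfl⟩
  have hmf : G.label f ∈ incidentLabels G v := ⟨f, ⟨hf, hvf⟩, rfl⟩
  have h1 : sInf (incidentLabels G v) ≤ G.label f := csInf_le hfin.bddBelow hmf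
  have hne : G.label e ≠ sInf (incidentLabels G v) := by
    intro h
    rw [h] at hlt
    exact absurd h1 hlt.not_ge
  exact csInf_le (hfin.subset Set.diff_subset).bddBelow ⟨hme, hne⟩

lemma secondLabel_attained {V : Type} [Fintype V] (G : EOGraph V) (v : V) {e f : Sym2 V}
    (he : e ∈ G.graph.edgeSet) (hve : v ∈ e) (hf : f ∈ G.graph.edgeSet) (hvf : v ∈ f)
    (hne : e ≠ f) :
    ∃ g ∈ G.graph.edgeSet, v ∈ g ∧ G.label g = secondLabel G v := by
  have hfin : (incidentLabels G v).Finite := Set.Finite.image _ (Set.toFinite _)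
  have hme : G.label e ∈ incidentLabels G v := ⟨e, ⟨he, hve⟩, rfl⟩
  have hmf : G.label f ∈ incidentLabels G v := ⟨f, ⟨hf, hvf⟩, rfl⟩
  have hlab : G.label e ≠ G.label f := fun h => hne (G.inj e he f hf h)
  have hne' : (incidentLabels G v \ {sInf (incidentLabels G v)}).Nonempty := by
    rcases eq_or_ne (G.label e) (sInf (incidentLabels G v)) with h | h
    · exact ⟨G.label f, hmf, fun hh => hlab (h.trans (Set.mem_singleton_iff.mp hh).symm)⟩
    · exact ⟨G.label e, hme, h⟩
  have hmem := hne'.csInf_mem (hfin.subset Set.diff_subset)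
  obtain ⟨⟨g, ⟨hg, hvg⟩, hgl⟩, -⟩ := hmem
  exact ⟨g, hg, hvg, hgl⟩

lemma key_noninclined {V : Type} [Fintype V] (G : EOBigraph V) (x y : V)
    (hadj : G.toEOGraph.graph.Adj x y) (hx : G.side x = false) (hy : G.side y = true)
    (hnl : ¬ LeftInclined G s(x, y)) (hnr : ¬ RightInclined G s(x, y)) :
    (∀ f ∈ G.toEOGraph.graph.edgeSet, x ∈ f →
        G.toEOGraph.label s(x, y) ≤ G.toEOGraph.label f) ∨
    (∀ f ∈ G.toEOGraph.graph.edgeSet, y ∈ f →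
        G.toEOGraph.label s(x, y) ≤ G.toEOGraph.label f) ∨
    G.toEOGraph.label s(x, y) = secondLabel G.toEOGraph x := by
  set H := G.toEOGraph with hH
  have he : s(x, y) ∈ H.graph.edgeSet := hadj
  by_cases hA : ∀ f ∈ H.graph.edgeSet, x ∈ f → H.label s(x, y) ≤ H.label f
  · exact Or.inl hA
  by_cases hB : ∀ f ∈ H.graph.edgeSet, y ∈ f → H.label s(x, y) ≤ H.label f
  · exact Or.inr (Or.inl hB)
  push_neg at hA hB
  obtain ⟨f, hf, hxf, hflt⟩ := hA
  obtain ⟨g, hg, hyg, hglt⟩ := hB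
  have hxe : x ∈ s(x, y) := Sym2.mem_mk_left x y
  have hye : y ∈ s(x, y) := Sym2.mem_mk_right x y
  have hef : s(x, y) ≠ f := fun h => by rw [h] at hflt; exact lt_irrefl _ hflt
  have heg : s(x, y) ≠ g := fun h => by rw [h] at hglt; exact lt_irrefl _ hglt
  have hdx : DegTwo H x := by
    rw [DegTwo, Nat.succ_le_iff]
    rw [Set.one_lt_ncard_iff (Set.toFinite _)]
    exact ⟨s(x, y), f, ⟨he, hxe⟩, ⟨hf, hxf⟩, hef⟩
  have hdy : DegTwo H y := by
    rw [DegTwo, Nat.succ_le_iff]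
    rw [Set.one_lt_ncard_iff (Set.toFinite _)]
    exact ⟨s(x, y), g, ⟨he, hye⟩, ⟨hg, hyg⟩, heg⟩
  have hlx : secondLabel H x ≤ H.label s(x, y) := secondLabel_le H x he hxe hf hxf hflt
  have hly : secondLabel H y ≤ H.label s(x, y) := secondLabel_le H y he hye hg hyg hglt
  have h1 : ¬ secondLabel H x < secondLabel H y := fun hlt =>
    hnl ⟨x, y, rfl, he, hx, hy, hdx, hdy, hlt, hly⟩
  have h2 : ¬ secondLabel H y < secondLabel H x := fun hlt =>
    hnr ⟨x, y, rfl, he, hx, hy, hdx, hdy, hlt, hlx⟩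
  have heq : secondLabel H x = secondLabel H y := le_antisymm (not_lt.mp h2) (not_lt.mp h1)
  obtain ⟨e₁, he₁, hxe₁, hl₁⟩ := secondLabel_attained H x he hxe hf hxf hef
  obtain ⟨e₂, he₂, hye₂, hl₂⟩ := secondLabel_attained H y he hye hg hyg heg
  have he12 : e₁ = e₂ := H.inj _ he₁ _ he₂ (by rw [hl₁, hl₂, heq])
  have hxy : x ≠ y := hadj.ne
  have hexy : e₁ = s(x, y) := (Sym2.mem_and_mem_iff hxy).mp ⟨hxe₁, he12 ▸ hye₂⟩
  exact Or.inr (Or.inr (by rw [← hexy, hl₁]))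

/-- Every edge-ordered bigraph on `n` vertices has at most `2n` non-inclined
edges. -/
theorem stmt_14 {V : Type} [Fintype V] (G : EOBigraph V) :
    {e | e ∈ G.toEOGraph.graph.edgeSet ∧ ¬ LeftInclined G e ∧ ¬ RightInclined G e}.ncard
      ≤ 2 * Fintype.card V := by
  classical
  by_cases hV : Nonempty V
  case neg =>
    have hE : IsEmpty V := not_nonempty_iff.mp hV
    have hE2 : IsEmpty (Sym2 V) := by infer_instance
    rw [Set.eq_empty_of_isEmpty {e | e ∈ G.toEOGraph.graph.edgeSet ∧ ¬ LeftInclined G e ∧ ¬ RightInclined G e}]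
    simp
  obtain ⟨v₀⟩ := hV
  set S := {e | e ∈ G.toEOGraph.graph.edgeSet ∧ ¬ LeftInclined G e ∧ ¬ RightInclined G e}
    with hS
  set H := G.toEOGraph with hH
  let T : V × Bool → Set (Sym2 V) := fun p =>
    cond p.2 {e | e ∈ H.graph.edgeSet ∧ p.1 ∈ e ∧ H.label e = secondLabel H p.1}
      {e | e ∈ H.graph.edgeSet ∧ p.1 ∈ e ∧ ∀ f ∈ H.graph.edgeSet, p.1 ∈ f →
        H.label e ≤ H.label f}
  have hsub : ∀ p e e', e ∈ T p → e' ∈ T p → e = e' := by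
    rintro ⟨v, b⟩ e e' he he'
    cases b
    · exact H.inj e he.1 e' he'.1 (le_antisymm (he.2.2 e' he'.1 he'.2.1) (he'.2.2 e he.1 he.2.1))
    · exact H.inj e he.1 e' he'.1 (he.2.2.trans he'.2.2.symm)
  have hcov : ∀ e ∈ S, ∃ p, e ∈ T p := by
    intro e
    induction e using Sym2.inductionOn with
    | hf a b =>
      rintro ⟨hab, hnl, hnr⟩
      have hadj : H.graph.Adj a b := hab
      have hside := G.proper a b hadj
      cases hsa : G.side a
      · have hsb : G.side b = true := by
          cases hsb' : G.side b
          · exact absurd (hsa.trans hsb'.symm) hside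
          · rfl
        rcases key_noninclined G a b hadj hsa hsb hnl hnr with h | h | h
        · exact ⟨(a, false), hab, Sym2.mem_mk_left a b, h⟩
        · exact ⟨(b, false), hab, Sym2.mem_mk_right a b, h⟩
        · exact ⟨(a, true), hab, Sym2.mem_mk_left a b, h⟩
      · have hsb : G.side b = false := by
          cases hsb' : G.side b
          · rfl
          · exact absurd (hsa.trans hsb'.symm) hside
        rw [Sym2.eq_swap] at hab hnl hnr ⊢
        rcases key_noninclined G b a hadj.symm hsb hsa hnl hnr with h | h | h
        · exact ⟨(b, false), hab, Sym2.mem_mk_left b a, h⟩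
        · exact ⟨(a, false), hab, Sym2.mem_mk_right b a, h⟩
        · exact ⟨(b, true), hab, Sym2.mem_mk_left b a, h⟩
  let g : Sym2 V → V × Bool := fun e => if h : ∃ p, e ∈ T p then h.choose else (v₀, false)
  have hmemg : ∀ e ∈ S, e ∈ T (g e) := by
    intro e he
    have h := hcov e he
    simp only [g, dif_pos h]
    exact h.choose_spec
  have hinj : Set.InjOn g S := by
    intro e he e' he' hgg
    refine hsub (g e) e e' (hmemg e he) ?_
    rw [hgg]
    exact hmemg e' he'
  calc S.ncard ≤ (Set.univ : Set (V × Bool)).ncard :=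
        Set.ncard_le_ncard_of_injOn g (fun e _ => Set.mem_univ (g e)) hinj Set.finite_univ
    _ = 2 * Fintype.card V := by
        rw [Set.ncard_univ, Nat.card_eq_fintype_card, Fintype.card_prod, Fintype.card_bool]
        ring
end

section
/- Let G be an edge-ordered bigraph that avoids P_6^{+13254}. Then the spanning subgraph G_l of G formed by its left inclined edges avoids P_5^{-2143}. -/
set_option maxHeartbeats 1000000

/-!
Let `x₀x₁x₂x₃x₄` be a copy of `P₅^{-2143}` in `G_l`, so that
`L(x₁x₂) < L(x₀x₁) < L(x₃x₄) < L(x₂x₃)`. Since `x₀x₁` and `x₂x₁` are left inclined,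
`l(x₀) < l(x₁) ≤ L(x₁x₂)`. The left vertex `x₀` has two edges with labels at most `l(x₀)`;
one of them, `x₀w`, avoids `x₃`, and `w` is a right vertex off the path (it is not `x₁`
because `L(x₀x₁) > l(x₀)`). Then `w x₀ x₁ x₂ x₃ x₄` is a copy of `P₆^{+13254}` in `G`.
-/

section PathEmbedding

variable {V : Type} [Fintype V] {n : ℕ}

lemma mem_pathGraph_succ_edgeSet {e : Sym2 (Fin (n + 1))} :
    e ∈ (SimpleGraph.pathGraph (n + 1)).edgeSet ↔ ∃ i : Fin n, e = s(i.castSucc, i.succ) := by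
  constructor
  · intro he
    obtain ⟨a, b, rfl, hab⟩ := pathGraph_edge_form he
    exact ⟨⟨a, by omega⟩, by congr 1; ext; simp [← hab]⟩
  · rintro ⟨i, rfl⟩
    simp [SimpleGraph.pathGraph_adj]

lemma pathLabel_castSucc_succ (w : Fin (n + 1) → ℝ) (i : Fin n) :
    pathLabel w s(i.castSucc, i.succ) = w i.castSucc := by
  simp [pathLabel, min_eq_left Fin.castSucc_lt_succ.le]

lemma bContains_pathEOBig_iff (G : EOBigraph V) (v : Fin (n + 1) → ℕ)
    (hv : Function.Injective v) (startRight : Bool) :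
    BContains G (pathEOBig (n + 1) v hv startRight) ↔
      ∃ f : Fin (n + 1) → V, Function.Injective f ∧
        (∀ i : Fin n, G.toEOGraph.graph.Adj (f i.castSucc) (f i.succ)) ∧
        (∀ i j : Fin n, v i.castSucc < v j.castSucc →
          G.toEOGraph.label s(f i.castSucc, f i.succ) <
            G.toEOGraph.label s(f j.castSucc, f j.succ)) ∧
        ∀ i, G.side (f i) = if i.val % 2 = 0 then startRight else !startRight := by
  have hedge : ∀ i : Fin n, s(i.castSucc, i.succ) ∈
      (pathEOBig (n + 1) v hv startRight).toEOGraph.graph.edgeSet :=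
    fun i => mem_pathGraph_succ_edgeSet.mpr ⟨i, rfl⟩
  have hlabel : ∀ i : Fin n, (pathEOBig (n + 1) v hv startRight).toEOGraph.label
      s(i.castSucc, i.succ) = v i.castSucc :=
    fun i => pathLabel_castSucc_succ (fun j => (v j : ℝ)) i
  constructor
  · rintro ⟨f, hinj, hadj, hord, hside⟩
    refine ⟨f, hinj, fun i => hadj _ _ (hedge i), fun i j hij => ?_, hside⟩
    simpa only [Sym2.map_mk] using
      hord _ (hedge i) _ (hedge j) (by rw [hlabel, hlabel]; exact_mod_cast hij)
  · rintro ⟨f, hinj, hadj, hord, hside⟩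
    refine ⟨f, hinj, fun a b hab => ?_, fun e he e' he' hlt => ?_, hside⟩
    · obtain ⟨i, hi⟩ := mem_pathGraph_succ_edgeSet.mp (show s(a, b) ∈ _ from hab)
      rw [← SimpleGraph.mem_edgeSet, ← Sym2.map_mk, hi, Sym2.map_mk]
      exact hadj i
    · obtain ⟨i, rfl⟩ := mem_pathGraph_succ_edgeSet.mp he
      obtain ⟨j, rfl⟩ := mem_pathGraph_succ_edgeSet.mp he'
      rw [hlabel, hlabel, Nat.cast_lt] at hlt
      simpa only [Sym2.map_mk] using hord i j hlt

end PathEmbedding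

section VertexLabel

variable {V : Type} [Fintype V]

lemma exists_adj_ne_label_le_secondLabel (G : EOGraph V) {v : V} (hv : DegTwo G v) (u : V) :
    ∃ w, w ≠ u ∧ G.graph.Adj v w ∧ G.label s(v, w) ≤ secondLabel G v := by
  have hT : (incidentLabels G v).Finite := (Set.toFinite _).image _
  have hT2 : 2 ≤ (incidentLabels G v).ncard := by
    rw [incidentLabels, Set.InjOn.ncard_image fun a ha b hb => G.inj a ha.1 b hb.1]
    exact hv
  have hmin : sInf (incidentLabels G v) ∈ incidentLabels G v :=
    (Set.nonempty_of_ncard_ne_zero (by omega)).csInf_mem hT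
  have hsecond : secondLabel G v ∈ incidentLabels G v \ {sInf (incidentLabels G v)} :=
    (Set.nonempty_of_ncard_ne_zero
      (by rw [Set.ncard_sdiff_singleton_of_mem hmin]; omega)).csInf_mem hT.sdiff
  have hmin_le : sInf (incidentLabels G v) ≤ secondLabel G v := csInf_le hT.bddBelow hsecond.1
  obtain ⟨e₁, ⟨he₁, hv₁⟩, hl₁⟩ := hmin
  obtain ⟨⟨e₂, ⟨he₂, hv₂⟩, hl₂⟩, hne⟩ := hsecond
  have h₁₂ : e₁ ≠ e₂ := fun h => hne (by rw [← hl₂, ← h, hl₁]; rfl)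
  obtain ⟨e, ⟨he, hve⟩, heu, hle⟩ : ∃ e, (e ∈ G.graph.edgeSet ∧ v ∈ e) ∧ e ≠ s(v, u) ∧
      G.label e ≤ secondLabel G v := by
    by_cases h : e₁ = s(v, u)
    · exact ⟨e₂, ⟨he₂, hv₂⟩, h ▸ h₁₂.symm, hl₂.le⟩
    · exact ⟨e₁, ⟨he₁, hv₁⟩, h, hl₁ ▸ hmin_le⟩
  obtain ⟨w, rfl⟩ := Sym2.mem_iff_exists.mp hve
  exact ⟨w, fun h => heu (h ▸ rfl), he, hle⟩

end VertexLabel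

section Inclined

variable {V : Type} [Fintype V] {G : EOBigraph V}

lemma inclinedLeftSub_adj {u w : V} :
    (inclinedLeftSub G).toEOGraph.graph.Adj u w ↔
      G.toEOGraph.graph.Adj u w ∧ LeftInclined G s(u, w) := by
  simp only [inclinedLeftSub, bigraphRestrict, SimpleGraph.fromEdgeSet_adj, Set.mem_ofPred_eq,
    SimpleGraph.mem_edgeSet]
  exact ⟨fun h => h.1, fun h => ⟨h, h.1.ne⟩⟩

lemma LeftInclined.of_side_eq_false {x y : V} (h : LeftInclined G s(x, y))
    (hx : G.side x = false) :
    DegTwo G.toEOGraph x ∧ secondLabel G.toEOGraph x < secondLabel G.toEOGraph y ∧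
      secondLabel G.toEOGraph y ≤ G.toEOGraph.label s(x, y) := by
  obtain ⟨a, b, hab, -, -, hb, hda, -, hlt, hle⟩ := h
  rcases Sym2.eq_iff.mp hab with ⟨rfl, rfl⟩ | ⟨rfl, -⟩
  · exact ⟨hda, hlt, hab ▸ hle⟩
  · exact absurd (hb.symm.trans hx) (by decide)

lemma LeftInclined.exists_adj_label_lt {x y z : V} (hxy : LeftInclined G s(x, y))
    (hyz : LeftInclined G s(y, z)) (hx : G.side x = false) (hz : G.side z = false) (u : V) :
    ∃ w, w ≠ u ∧ G.toEOGraph.graph.Adj x w ∧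
      G.toEOGraph.label s(w, x) < G.toEOGraph.label s(y, z) := by
  obtain ⟨hdeg, hlt, -⟩ := hxy.of_side_eq_false hx
  obtain ⟨-, -, hle⟩ := (Sym2.eq_swap ▸ hyz : LeftInclined G s(z, y)).of_side_eq_false hz
  obtain ⟨w, hwu, hadj, hwl⟩ := exists_adj_ne_label_le_secondLabel _ hdeg u
  refine ⟨w, hwu, hadj, ?_⟩
  rw [Sym2.eq_swap] at hwl hle
  linarith

end Inclined

lemma bContains_P6plus_13254_of_chain {V : Type} [Fintype V] {G : EOBigraph V}
    {f : Fin 6 → V} (hf : Function.Injective f)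
    (hadj : ∀ i : Fin 5, G.toEOGraph.graph.Adj (f i.castSucc) (f i.succ))
    (hside : ∀ i, G.side (f i) = P6plus_13254.side i)
    (h₁ : G.toEOGraph.label s(f 0, f 1) < G.toEOGraph.label s(f 2, f 3))
    (h₂ : G.toEOGraph.label s(f 2, f 3) < G.toEOGraph.label s(f 1, f 2))
    (h₃ : G.toEOGraph.label s(f 1, f 2) < G.toEOGraph.label s(f 4, f 5))
    (h₄ : G.toEOGraph.label s(f 4, f 5) < G.toEOGraph.label s(f 3, f 4)) :
    BContains G P6plus_13254 := by
  refine (bContains_pathEOBig_iff G _ _ _).mpr ⟨f, hf, hadj, fun i j hij => ?_, hside⟩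
  fin_cases i <;> fin_cases j <;> simp at hij ⊢ <;> linarith

/-- If an edge-ordered bigraph `G` avoids `P₆^{+13254}`, then the spanning
subgraph `G_l` of its left inclined edges avoids `P₅^{-2143}`. -/
theorem stmt_15 {V : Type} [Fintype V] (G : EOBigraph V) (h : ¬ BContains G P6plus_13254) :
    ¬ BContains (inclinedLeftSub G) P5minus_2143 := by
  intro hc
  obtain ⟨f, hinj, hadj, hord, hside⟩ :=
    (bContains_pathEOBig_iff (inclinedLeftSub G) _ _ _).mp hc
  simp only [inclinedLeftSub_adj] at hadj
  have hs₀ : G.side (f 0) = false := hside 0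
  have hs₂ : G.side (f 2) = false := hside 2
  have hs₄ : G.side (f 4) = false := hside 4
  have hlt₁₀ : G.toEOGraph.label s(f 1, f 2) < G.toEOGraph.label s(f 0, f 1) :=
    hord 1 0 (by decide)
  have hlt₀₃ : G.toEOGraph.label s(f 0, f 1) < G.toEOGraph.label s(f 3, f 4) :=
    hord 0 3 (by decide)
  have hlt₃₂ : G.toEOGraph.label s(f 3, f 4) < G.toEOGraph.label s(f 2, f 3) :=
    hord 3 2 (by decide)
  obtain ⟨w, hw₃, hw₀, hw⟩ := (hadj 0).2.exists_adj_label_lt (hadj 1).2 hs₀ hs₂ (f 3)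
  have hws : G.side w = true := by simpa [hs₀] using (G.proper _ _ hw₀).symm
  have hwf : w ∉ Set.range f := by
    rintro ⟨i, rfl⟩
    fin_cases i
    · exact hw₀.ne rfl
    · rw [Sym2.eq_swap] at hw; exact hlt₁₀.not_gt hw
    · simp [hs₂] at hws
    · exact hw₃ rfl
    · simp [hs₄] at hws
  refine h (bContains_P6plus_13254_of_chain (f := Fin.cons w f)
    (Fin.cons_injective_iff.mpr ⟨hwf, hinj⟩) ?_ ?_ hw hlt₁₀ hlt₀₃ hlt₃₂)
  · intro i
    cases i using Fin.cases with
    | zero => exact hw₀.symm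
    | succ j => simpa using (hadj j).1
  · intro i
    cases i using Fin.cases with
    | zero => exact hws
    | succ j => fin_cases j <;> exact hside _
end
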